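/- arXiv:1011.1524 — 3 statements merged into one kernel-verified Lean document; each statement's English description precedes it below -/
import Mathlib

section
/- An NSS topological group contains no f_ω-Cauchy productive sequences, where f_ω is the constant weight function allowing arbitrary integer exponents. -/
/-!
If the partial products of `aₙ ^ zₙ` are left Cauchy, their successive quotients `aₙ ^ zₙ`
tend to `1`, so they eventually lie in a neighbourhood `U` containing no nontrivial subgroup.
But for `aₙ ≠ 1` the cyclic group generated by `aₙ` is not inside `U`, so some power `aₙ ^ zₙ`
leaves `U`. Choosing such exponents forces `aₙ = 1` for all large `n`, contradicting injectivity.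
-/

/-- A sequence in a topological group is *left Cauchy*. -/
def IsLeftCauchy {G : Type*} [Group G] [TopologicalSpace G] (u : ℕ → G) : Prop :=
  ∀ U ∈ nhds (1 : G), ∃ k : ℕ, ∀ l m : ℕ, k ≤ l → k ≤ m → (u l)⁻¹ * u m ∈ U

open Filter Topology

theorem IsLeftCauchy.tendsto_inv_mul_succ {G : Type*} [Group G] [TopologicalSpace G]
    {u : ℕ → G} (hu : IsLeftCauchy u) : Tendsto (fun m => (u m)⁻¹ * u (m + 1)) atTop (𝓝 1) :=
  fun U hU => by
    obtain ⟨k, hk⟩ := hu U hU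
    exact eventually_atTop.2 ⟨k, fun m hm => hk m (m + 1) hm (by omega)⟩

theorem inv_mul_prod_range_succ {G : Type*} [Group G] (f : ℕ → G) (m : ℕ) :
    ((List.range (m + 1)).map f).prod⁻¹ * ((List.range (m + 1 + 1)).map f).prod = f (m + 1) := by
  rw [List.range_succ (n := m + 1), List.map_append, List.prod_append]
  simp

theorem tendsto_one_of_isLeftCauchy_prod_range {G : Type*} [Group G] [TopologicalSpace G]
    {f : ℕ → G} (hf : IsLeftCauchy (fun m => ((List.range (m + 1)).map f).prod)) :
    Tendsto f atTop (𝓝 1) := by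
  rw [← tendsto_add_atTop_iff_nat 1]
  simpa only [inv_mul_prod_range_succ] using hf.tendsto_inv_mul_succ

theorem exists_zpow_notMem_of_ne_one {G : Type*} [Group G] {U : Set G}
    (hU : ∀ H : Subgroup G, (H : Set G) ⊆ U → H = ⊥) {g : G} (hg : g ≠ 1) :
    ∃ k : ℤ, g ^ k ∉ U := by
  by_contra! hpow
  have hbot : Subgroup.zpowers g = ⊥ := hU _ (by rintro _ ⟨k, rfl⟩; exact hpow k)
  exact hg (Subgroup.zpowers_eq_bot.1 hbot)

theorem stmt5_general {G : Type*} [Group G] [TopologicalSpace G]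
    (hNSS : ∃ U ∈ nhds (1 : G), ∀ H : Subgroup G, (H : Set G) ⊆ U → H = ⊥) :
    ¬ ∃ a : ℕ → G, Function.Injective a ∧ ∀ z : ℕ → ℤ,
      IsLeftCauchy (fun m => ((List.range (m + 1)).map (fun n => a n ^ z n)).prod) := by
  rintro ⟨a, hinj, hC⟩
  obtain ⟨U, hU, hsub⟩ := hNSS
  have hexp : ∀ n, ∃ k : ℤ, a n ^ k ∈ U → a n = 1 := fun n => by
    by_cases h : a n = 1
    · exact ⟨0, fun _ => h⟩
    · obtain ⟨k, hk⟩ := exists_zpow_notMem_of_ne_one hsub h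
      exact ⟨k, fun hkU => absurd hkU hk⟩
  choose z hz using hexp
  have h_eq_one : ∀ᶠ n in atTop, a n = 1 :=
    ((tendsto_one_of_isLeftCauchy_prod_range (hC z)).eventually_mem hU).mono hz
  have h_ne_one : ∀ᶠ n in atTop, a n ≠ 1 :=
    Nat.cofinite_eq_atTop ▸ hinj.tendsto_cofinite.eventually (eventually_cofinite_ne 1)
  obtain ⟨n, h1, h2⟩ := (h_eq_one.and h_ne_one).exists
  exact h2 h1

/-- An NSS topological group (one having a neighborhood of the identity that contains
no nontrivial subgroup) contains no `f_ω`-Cauchy productive sequence: there is no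
faithfully indexed sequence `{a_n}` such that for every `z : ℕ → ℤ` the partial
products of `{a_n ^ z n}` form a left Cauchy sequence. -/
theorem stmt5 {G : Type*} [Group G] [TopologicalSpace G] [IsTopologicalGroup G] [T2Space G]
    (hNSS : ∃ U ∈ nhds (1 : G), ∀ H : Subgroup G, (H : Set G) ⊆ U → H = ⊥) :
    ¬ ∃ a : ℕ → G, Function.Injective a ∧ ∀ z : ℕ → ℤ,
      IsLeftCauchy (fun m => ((List.range (m + 1)).map (fun n => a n ^ z n)).prod) :=
  stmt5_general hNSS
end

section
/- A metric group G is NSS if and only if G does not contain an f_ω-Cauchy productive sequence, if and only if G does not contain an unconditionally f_ω-Cauchy productive sequence. -/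
/-- A sequence `{a_n}` is `f_ω`-Cauchy productive if for every `z : ℕ → ℤ` the partial
products of `{a_n ^ z n}` are left Cauchy. -/
def IsFOmegaCauchyProductive {G : Type*} [Group G] [TopologicalSpace G] (a : ℕ → G) : Prop :=
  ∀ z : ℕ → ℤ,
    IsLeftCauchy (fun m => ((List.range (m + 1)).map (fun n => a n ^ z n)).prod)

/-!
If `U` witnesses NSS, choose `z n` so that `a n ^ z n ∉ U` unless the whole cyclic group
`⟨a n⟩` lies in `U`. The Cauchy condition puts the factors `a n ^ z n` into `U` for large `n`,
hence `⟨a n⟩ ⊆ U`, hence `a n = 1`, which an injective sequence cannot do twice.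

Conversely, if `G` is not NSS, take a countable basis `V n` at `1` with `V (n+1)³ ⊆ V n` and
pick distinct `a n ≠ 1` with `⟨a n⟩ ⊆ V (ι n)` for distinct `ι n`. A product, in any order, of
elements of `V i` over distinct indices `i > N` lies in `V N`: split it at the factor of index
`N + 1`. So for every rearrangement the tails of the partial products become small.
-/

open Filter Function Set Topology
open scoped Pointwise

def IsNSS (G : Type*) [Group G] [TopologicalSpace G] : Prop :=
  ∃ U ∈ 𝓝 (1 : G), ∀ H : Subgroup G, (H : Set G) ⊆ U → H = ⊥

section Monoid

variable {M : Type*} [Monoid M]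

theorem list_prod_mem_of_nodup_map {α : Type*} {V : ℕ → Set M} (hone : ∀ n, (1 : M) ∈ V n)
    (hV : ∀ n, V (n + 1) * V (n + 1) * V (n + 1) ⊆ V n) {ι : α → ℕ} {g : α → M}
    (hg : ∀ i, g i ∈ V (ι i)) {N : ℕ} {t : List α} (hnd : (t.map ι).Nodup)
    (ht : ∀ i ∈ t, N < ι i) : (t.map g).prod ∈ V N := by
  -- Induction on a bound `K` for the indices, peeling off the unique factor of index `N + 1`.
  obtain ⟨K, hK⟩ : ∃ K, ∀ i ∈ t, ι i ≤ N + K :=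
    ⟨(t.map ι).sum, fun i hi => (List.le_sum_of_mem (List.mem_map_of_mem hi)).trans le_add_self⟩
  induction K generalizing N t with
  | zero =>
    obtain rfl : t = [] := List.eq_nil_iff_forall_not_mem.2 fun i hi => by
      have := ht i hi; have := hK i hi; omega
    simpa using hone N
  | succ K ih =>
    by_cases hx : ∃ x ∈ t, ι x = N + 1
    · obtain ⟨x, hx, hιx⟩ := hx
      obtain ⟨t₁, t₂, rfl⟩ := List.append_of_mem hx
      rw [List.map_append, List.map_cons, List.nodup_middle, List.nodup_cons,
        ← List.map_append] at hnd
      have hsub : t₁ ++ t₂ ⊆ t₁ ++ x :: t₂ := ((List.sublist_cons_self x t₂).append_left t₁).subset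
      have hlarge : ∀ i ∈ t₁ ++ t₂, N + 1 < ι i ∧ ι i ≤ N + 1 + K := fun i hi => by
        have hne : ι i ≠ ι x := fun h => hnd.1 (h ▸ List.mem_map_of_mem hi)
        have := ht i (hsub hi); have := hK i (hsub hi); omega
      have hp₁ := ih (N := N + 1) (t := t₁) (List.sublist_append_left _ _ |>.map ι |>.nodup hnd.2)
        (fun i hi => (hlarge i (by simp [hi])).1) (fun i hi => (hlarge i (by simp [hi])).2)
      have hp₂ := ih (N := N + 1) (t := t₂) (List.sublist_append_right _ _ |>.map ι |>.nodup hnd.2)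
        (fun i hi => (hlarge i (by simp [hi])).1) (fun i hi => (hlarge i (by simp [hi])).2)
      rw [List.map_append, List.prod_append, List.map_cons, List.prod_cons, ← mul_assoc]
      exact hV N (mul_mem_mul (mul_mem_mul hp₁ (hιx ▸ hg x)) hp₂)
    · push Not at hx
      have hsucc : V (N + 1) ⊆ V N := fun x hx =>
        hV N (by simpa using mul_mem_mul (mul_mem_mul hx (hone _)) (hone _))
      refine hsucc (ih hnd (fun i hi => ?_) (fun i hi => ?_))
      · have := ht i hi; have := hx i hi; omega
      · have := hK i hi; omega

variable [TopologicalSpace M] [ContinuousMul M] [(𝓝 (1 : M)).IsCountablyGenerated]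

variable (M) in
theorem exists_antitone_basis_nhds_one_mul_mul_subset :
    ∃ V : ℕ → Set M, (𝓝 1).HasAntitoneBasis V ∧ ∀ n, V (n + 1) * V (n + 1) * V (n + 1) ⊆ V n := by
  obtain ⟨B, hB⟩ := (𝓝 (1 : M)).exists_antitone_basis
  obtain ⟨φ, -, hφ, hBφ⟩ := hB.subbasis_with_rel (r := fun m n => B n * B n * B n ⊆ B m)
    fun m => by
      obtain ⟨W, hW, hW4⟩ := exists_nhds_one_split4 (hB.mem m)
      filter_upwards [hB.tendsto_smallSets.eventually (eventually_smallSets_subset.2 hW)]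
        with n hn
      rintro _ ⟨_, ⟨p, hp, q, hq, rfl⟩, r, hr, rfl⟩
      simpa using hW4 (hn hp) (hn hq) (hn hr) (mem_of_mem_nhds hW)
  exact ⟨B ∘ φ, hBφ, fun n => hφ n.lt_succ_self⟩

end Monoid

section Group

variable {G : Type*} [Group G] [TopologicalSpace G]

theorem isLeftCauchy_of_forall_le [IsTopologicalGroup G] {u : ℕ → G}
    (hu : ∀ U ∈ 𝓝 (1 : G), ∃ k, ∀ l m, k ≤ l → l ≤ m → (u l)⁻¹ * u m ∈ U) :
    IsLeftCauchy u := by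
  intro U hU
  obtain ⟨k, hk⟩ := hu (U ∩ U⁻¹) (inter_mem hU (inv_mem_nhds_one G hU))
  refine ⟨k, fun l m hl hm => ?_⟩
  rcases le_total l m with hlm | hml
  · exact (hk l m hl hlm).1
  · simpa using (hk m l hm hml).2

theorem isFOmegaCauchyProductive_of_zpow_mem [IsTopologicalGroup G] {V : ℕ → Set G}
    (hV : (𝓝 1).HasAntitoneBasis V) (hV₃ : ∀ n, V (n + 1) * V (n + 1) * V (n + 1) ⊆ V n)
    {a : ℕ → G} {ι : ℕ → ℕ} (hι : Injective ι) (ha : ∀ n (w : ℤ), a n ^ w ∈ V (ι n)) :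
    IsFOmegaCauchyProductive a := by
  intro z
  refine isLeftCauchy_of_forall_le fun U hU => ?_
  obtain ⟨N, -, hN⟩ := hV.toHasBasis.mem_iff.1 hU
  obtain ⟨k, hk⟩ := eventually_atTop.1 <|
    (Nat.cofinite_eq_atTop ▸ hι.tendsto_cofinite).eventually (eventually_gt_atTop N)
  refine ⟨k, fun l m hl hlm => hN ?_⟩
  have hsplit :
      List.range (m + 1) = List.range (l + 1) ++ (List.range (m - l)).map (l + 1 + ·) := by
    rw [← List.range_add]; congr 1; omega
  rw [hsplit, List.map_append, List.prod_append, inv_mul_cancel_left, List.map_map]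
  refine list_prod_mem_of_nodup_map (fun n => mem_of_mem_nhds (hV.mem n)) hV₃
    (ι := ι ∘ (l + 1 + ·)) (fun j => ha _ (z _)) ?_ fun j _ => hk _ (by dsimp only; omega)
  exact List.nodup_range.map (hι.comp (add_right_injective _))

theorem exists_injective_zpow_mem_of_not_isNSS [T1Space G] {V : ℕ → Set G}
    (hV : (𝓝 1).HasAntitoneBasis V) (hG : ¬ IsNSS G) :
    ∃ a : ℕ → G, Injective a ∧ ∃ ι : ℕ → ℕ, Injective ι ∧ ∀ n (w : ℤ), a n ^ w ∈ V (ι n) := by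
  have hsmall : ∀ n, ∃ c : G, c ≠ 1 ∧ ∀ w : ℤ, c ^ w ∈ V n := fun n => by
    simp only [IsNSS, not_exists, not_and, not_forall] at hG
    obtain ⟨H, hHV, hH⟩ := hG (V n) (hV.mem n)
    obtain ⟨⟨c, hcH⟩, hc⟩ := Subgroup.ne_bot_iff_exists_ne_one.1 hH
    exact ⟨c, by simpa using hc, fun w => hHV (H.zpow_mem hcH w)⟩
  choose c hc₁ hcV using hsmall
  -- A finite set avoiding `1` is closed, so its complement would contain some `V N ∋ c N`.
  have hinf : (range c).Infinite := fun hfin => by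
    obtain ⟨N, -, hN⟩ := hV.toHasBasis.mem_iff.1 <|
      hfin.isClosed.isOpen_compl.mem_nhds fun ⟨n, hn⟩ => hc₁ n hn
    exact hN (by simpa using hcV N 1) ⟨N, rfl⟩
  let e := hinf.natEmbedding
  choose ι hι using fun n => (e n).2
  have ha : Injective fun n => (e n : G) := Subtype.val_injective.comp e.injective
  refine ⟨fun n => e n, ha, ι, .of_comp (f := c) ?_, fun n w => ?_⟩
  · simpa only [comp_def, hι] using ha
  · simpa only [← hι n] using hcV (ι n) w

theorem IsNSS.not_isFOmegaCauchyProductive (hG : IsNSS G) {a : ℕ → G} (ha : Injective a) :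
    ¬ IsFOmegaCauchyProductive a := by
  obtain ⟨U, hU, hUG⟩ := hG
  intro hprod
  choose z hz using fun n =>
    show ∃ w : ℤ, a n ^ w ∈ U → ∀ v : ℤ, a n ^ v ∈ U by
      by_contra! h
      obtain ⟨v, hv⟩ := (h 0).2
      exact hv (h v).1
  obtain ⟨k, hk⟩ := hprod z U hU
  have htrivial : ∀ n, k ≤ n → a (n + 1) = 1 := fun n hn => by
    have hstep := hk n (n + 1) hn (by omega)
    dsimp only at hstep
    rw [List.prod_range_succ _ (n + 1), inv_mul_cancel_left] at hstep
    refine Subgroup.zpowers_eq_bot.1 (hUG _ ?_)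
    rintro _ ⟨w, rfl⟩
    exact hz _ hstep w
  exact absurd (ha ((htrivial k le_rfl).trans (htrivial (k + 1) (by omega)).symm)) (by omega)

end Group

theorem stmt11_general {G : Type*} [Group G] [TopologicalSpace G] [IsTopologicalGroup G]
    [TopologicalSpace.MetrizableSpace G] :
    ((∃ U ∈ nhds (1 : G), ∀ H : Subgroup G, (H : Set G) ⊆ U → H = ⊥) ↔
      ¬ ∃ a : ℕ → G, Function.Injective a ∧ IsFOmegaCauchyProductive a) ∧
    ((∃ U ∈ nhds (1 : G), ∀ H : Subgroup G, (H : Set G) ⊆ U → H = ⊥) ↔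
      ¬ ∃ a : ℕ → G, Function.Injective a ∧
        ∀ φ : ℕ → ℕ, Function.Bijective φ → IsFOmegaCauchyProductive (fun n => a (φ n))) := by
  obtain ⟨V, hV, hV₃⟩ := exists_antitone_basis_nhds_one_mul_mul_subset G
  have nss : IsNSS G → ¬ ∃ a : ℕ → G, Injective a ∧ IsFOmegaCauchyProductive a :=
    fun hG ⟨a, ha, hprod⟩ => hG.not_isFOmegaCauchyProductive ha hprod
  have not_nss : ¬ IsNSS G → ∃ a : ℕ → G, Injective a ∧
      ∀ φ : ℕ → ℕ, Bijective φ → IsFOmegaCauchyProductive (fun n => a (φ n)) := fun hG => by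
    obtain ⟨a, ha, ι, hι, hpow⟩ := exists_injective_zpow_mem_of_not_isNSS hV hG
    exact ⟨a, ha, fun φ hφ =>
      isFOmegaCauchyProductive_of_zpow_mem hV hV₃ (hι.comp hφ.1) fun n => hpow (φ n)⟩
  have forget : (∃ a : ℕ → G, Injective a ∧
      ∀ φ : ℕ → ℕ, Bijective φ → IsFOmegaCauchyProductive (fun n => a (φ n))) →
      ∃ a : ℕ → G, Injective a ∧ IsFOmegaCauchyProductive a :=
    fun ⟨a, ha, hprod⟩ => ⟨a, ha, hprod id bijective_id⟩
  exact ⟨⟨nss, fun h => by_contra fun hG => h (forget (not_nss hG))⟩,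
    ⟨fun hG h => nss hG (forget h), fun h => by_contra fun hG => h (not_nss hG)⟩⟩

/-- A metrizable topological group `G` is NSS (some neighborhood of the identity
contains no nontrivial subgroup) iff it contains no `f_ω`-Cauchy productive sequence,
iff it contains no unconditionally `f_ω`-Cauchy productive sequence. -/
theorem stmt11 {G : Type*} [Group G] [TopologicalSpace G] [IsTopologicalGroup G] [T2Space G]
    [TopologicalSpace.MetrizableSpace G] :
    ((∃ U ∈ nhds (1 : G), ∀ H : Subgroup G, (H : Set G) ⊆ U → H = ⊥) ↔
      ¬ ∃ a : ℕ → G, Function.Injective a ∧ IsFOmegaCauchyProductive a) ∧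
    ((∃ U ∈ nhds (1 : G), ∀ H : Subgroup G, (H : Set G) ⊆ U → H = ⊥) ↔
      ¬ ∃ a : ℕ → G, Function.Injective a ∧
        ∀ φ : ℕ → ℕ, Function.Bijective φ → IsFOmegaCauchyProductive (fun n => a (φ n))) :=
  stmt11_general
end

section
/- Let (X, <) be a linearly ordered set and let F(X) be the free group on X. The function η : F(X) → ℕ assigning to each reduced word w the number of local extrema of the sequence of letters (ignoring exponents) occurring in the canonical representation of w is a seminorm on F(X): η(ab) ≤ η(a) + η(b) and η(a) = η(a⁻¹) for all a, b ∈ F(X). -/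
/-!
After free cancellation the reduced word of `a * b` is a prefix of the reduced word of `a`
followed by a suffix of that of `b`, and collapsing repeated letters keeps this shape:
`σ(ab) = u ++ t`, `σ(a) = u ++ s₁`, `σ(b) = s₂ ++ t`. An extremum of `u ++ t` away from the
junction is an extremum of `u ++ s₁` or of `s₂ ++ t`, since it sees the same neighbours there.
The two letters at the junction are charged to the last letter of `u ++ s₁` and the first
letter of `s₂ ++ t`, which are extrema because in a sequence without equal neighbours both
endpoints are. Inversion reverses the support, and reversal preserves local extrema.
-/

/-- Index `i` is a local maximum of the finite sequence `(s 0, …, s k)`. -/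
def IsLocMax {X : Type*} [LinearOrder X] (k : ℕ) (s : ℕ → X) (i : ℕ) : Prop :=
  i ≤ k ∧ (i ≠ 0 → s (i - 1) < s i) ∧ (i ≠ k → s (i + 1) < s i)

/-- Index `i` is a local minimum of the finite sequence `(s 0, …, s k)`. -/
def IsLocMin {X : Type*} [LinearOrder X] (k : ℕ) (s : ℕ → X) (i : ℕ) : Prop :=
  i ≤ k ∧ (i ≠ 0 → s i < s (i - 1)) ∧ (i ≠ k → s i < s (i + 1))

/-- The set of indices of local extrema of the finite sequence `(s 0, …, s k)`. -/
def ExtSet {X : Type*} [LinearOrder X] (k : ℕ) (s : ℕ → X) : Set ℕ :=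
  {i | IsLocMax k s i ∨ IsLocMin k s i}

/-- The support `σ(w)` of a word `w` in the free group: the sequence of letters
`(x_1, …, x_k)` (with `x_i ≠ x_{i+1}`) appearing in the canonical representation
`w = x_1^{z_1} ⋯ x_k^{z_k}`; obtained from the reduced word of `w` by collapsing
consecutive equal letters. -/
def wordSupport {X : Type*} [LinearOrder X] (w : FreeGroup X) : List X :=
  List.destutter (· ≠ ·) ((FreeGroup.toWord w).map Prod.fst)

/-- `η w` is the number of local extrema of the support of `w` (and `0` for the
empty word). -/
noncomputable def eta {X : Type*} [LinearOrder X] (w : FreeGroup X) : ℕ :=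
  if h : wordSupport w = [] then 0
  else (ExtSet ((wordSupport w).length - 1)
    (fun i => (wordSupport w).getD i ((wordSupport w).head h))).ncard


namespace List

variable {α : Type*}

theorem exists_destutter'_eq_cons (R : α → α → Prop) [DecidableRel R] (a : α) (l : List α) :
    ∃ t, l.destutter' R a = a :: t := by
  induction l generalizing a with
  | nil => exact ⟨[], rfl⟩
  | cons b l ih =>
    rw [destutter'_cons]
    split
    · exact ⟨_, rfl⟩
    · exact ih a

theorem destutter'_append (R : α → α → Prop) [DecidableRel R] (a : α) (l₁ l₂ : List α) :
    (l₁ ++ l₂).destutter' R a = l₁.destutter' R a ++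
      (l₂.destutter' R ((l₁.destutter' R a).getLast (destutter'_ne_nil _ _))).tail := by
  induction l₁ generalizing a with
  | nil =>
    obtain ⟨t, ht⟩ := exists_destutter'_eq_cons R a l₂
    simp [ht]
  | cons b l₁ ih =>
    simp only [cons_append, destutter'_cons]
    split
    · rw [ih b, cons_append, getLast_cons (destutter'_ne_nil _ _)]
    · exact ih a

variable [DecidableEq α]

theorem destutter'_ne_eq_ite (a : α) (l : List α) :
    l.destutter' (· ≠ ·) a = if (l.destutter (· ≠ ·)).head? = some a then l.destutter (· ≠ ·)
      else a :: l.destutter (· ≠ ·) := by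
  cases l with
  | nil => simp
  | cons b l =>
    obtain ⟨t, ht⟩ := exists_destutter'_eq_cons (· ≠ ·) b l
    rw [destutter'_cons, destutter_cons', ht]
    by_cases h : a = b
    · subst h; simp [ht]
    · simp [h, Ne.symm h]

theorem tail_destutter'_ne_suffix (a : α) (l : List α) :
    (l.destutter' (· ≠ ·) a).tail <:+ l.destutter (· ≠ ·) := by
  rw [destutter'_ne_eq_ite]
  split
  · exact tail_suffix _
  · exact suffix_rfl

theorem destutter_ne_append (l₁ l₂ : List α) :
    ∃ t, (l₁ ++ l₂).destutter (· ≠ ·) = l₁.destutter (· ≠ ·) ++ t ∧ t <:+ l₂.destutter (· ≠ ·) := by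
  cases l₁ with
  | nil => exact ⟨_, rfl, suffix_rfl⟩
  | cons a l₁ =>
    exact ⟨_, destutter'_append _ a l₁ l₂, tail_destutter'_ne_suffix _ _⟩

theorem destutter_ne_concat (l : List α) (b : α) :
    (l ++ [b]).destutter (· ≠ ·) = if (l.destutter (· ≠ ·)).getLast? = some b
      then l.destutter (· ≠ ·) else l.destutter (· ≠ ·) ++ [b] := by
  cases l with
  | nil => simp
  | cons a l =>
    rw [cons_append, destutter_cons', destutter'_append, destutter_cons',
      getLast?_eq_some_getLast (destutter'_ne_nil _ _), destutter'_singleton]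
    split <;> simp_all

theorem destutter_ne_reverse (l : List α) :
    l.reverse.destutter (· ≠ ·) = (l.destutter (· ≠ ·)).reverse := by
  induction l with
  | nil => rfl
  | cons a l ih =>
    rw [reverse_cons, destutter_ne_concat, ih, destutter_cons', destutter'_ne_eq_ite,
      getLast?_reverse]
    split <;> simp

theorem destutter_ne_suffix_append (l₁ l₂ : List α) :
    l₂.destutter (· ≠ ·) <:+ (l₁ ++ l₂).destutter (· ≠ ·) := by
  obtain ⟨t, ht, -⟩ := destutter_ne_append l₂.reverse l₁.reverse
  rw [← reverse_append, destutter_ne_reverse, destutter_ne_reverse] at ht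
  rw [← reverse_reverse ((l₁ ++ l₂).destutter (· ≠ ·)), ht, reverse_append, reverse_reverse]
  exact suffix_append _ _

end List

namespace FreeGroup

variable {α : Type*} [DecidableEq α]

theorem reduce_append_eq_append_of_isReduced {L₁ L₂ : List (α × Bool)} (h₁ : IsReduced L₁)
    (h₂ : IsReduced L₂) : ∃ p q, p <+: L₁ ∧ q <:+ L₂ ∧ reduce (L₁ ++ L₂) = p ++ q := by
  induction L₁ using List.reverseRecOn generalizing L₂ with
  | nil => exact ⟨[], L₂, List.nil_prefix, List.suffix_rfl, h₂.reduce_eq⟩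
  | append_singleton L₁ a ih =>
    cases L₂ with
    | nil => exact ⟨L₁ ++ [a], [], List.prefix_rfl, List.nil_suffix, by simpa using h₁.reduce_eq⟩
    | cons y L₂ =>
      by_cases hy : y = (a.1, !a.2)
      · subst hy
        have hstep : reduce (L₁ ++ [a] ++ (a.1, !a.2) :: L₂) = reduce (L₁ ++ L₂) := by
          simpa using reduce.Step.eq (Red.Step.not (L₁ := L₁) (L₂ := L₂) (x := a.1) (b := a.2))
        obtain ⟨p, q, hp, hq, he⟩ :=
          ih (h₁.infix (List.prefix_append _ _).isInfix) (h₂.infix (List.suffix_cons _ _).isInfix)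
        exact ⟨p, q, hp.trans (List.prefix_append _ _), hq.trans (List.suffix_cons _ _),
          hstep.trans he⟩
      · have hay : IsReduced (a :: y :: L₂) := by
          refine isReduced_cons_cons.mpr ⟨fun h => ?_, h₂⟩
          obtain ⟨x, b⟩ := a
          obtain ⟨x', b'⟩ := y
          cases b <;> cases b' <;> simp_all
        exact ⟨L₁ ++ [a], y :: L₂, List.prefix_rfl, List.suffix_rfl,
          (h₁.append_overlap hay (List.cons_ne_nil _ _)).reduce_eq⟩

theorem exists_toWord_mul_eq_append (a b : FreeGroup α) :
    ∃ p q, p <+: a.toWord ∧ q <:+ b.toWord ∧ (a * b).toWord = p ++ q := by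
  rw [toWord_mul]
  exact reduce_append_eq_append_of_isReduced isReduced_toWord isReduced_toWord

end FreeGroup

theorem Nat.sub_injOn_Iic (k : ℕ) : Set.InjOn (k - ·) (Set.Iic k) := by
  intro i hi j hj hij
  simp only [Set.mem_Iic] at hi hj
  simp only at hij
  omega

section ExtSet

variable {X : Type*} [LinearOrder X] {k k' m i : ℕ} {s s' : ℕ → X}

theorem extSet_subset_Iic : ExtSet k s ⊆ Set.Iic k := by
  rintro i (h | h) <;> exact h.1

theorem extSet_finite : (ExtSet k s).Finite :=
  (Set.finite_Iic k).subset extSet_subset_Iic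

theorem mem_extSet_congr (hk : i ≤ k ↔ i ≤ k') (hk' : i = k ↔ i = k')
    (hs : ∀ j ≤ i + 1, j ≤ k → s j = s' j) : i ∈ ExtSet k s ↔ i ∈ ExtSet k' s' := by
  by_cases hik : i ≤ k
  · have e₀ := hs (i - 1) (by omega) (by omega)
    have e₁ := hs i (by omega) hik
    by_cases hi : i = k
    · obtain rfl := hi
      obtain rfl := hk'.mp rfl
      simp only [ExtSet, IsLocMax, IsLocMin, Set.mem_ofPred_eq, e₀, e₁, ne_eq, not_true_eq_false,
        IsEmpty.forall_iff, and_true]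
    · have e₂ := hs (i + 1) le_rfl (by omega)
      simp only [ExtSet, IsLocMax, IsLocMin, Set.mem_ofPred_eq, e₀, e₁, e₂, hik, hk.mp hik,
        ne_eq, hi, mt hk'.mpr hi, not_false_eq_true, forall_const, true_and]
  · exact iff_of_false (fun h => hik (extSet_subset_Iic h))
      (fun h => hik (hk.2 (extSet_subset_Iic h)))

theorem extSet_congr (hs : ∀ j ≤ k, s j = s' j) : ExtSet k s = ExtSet k s' :=
  Set.ext fun _ => mem_extSet_congr Iff.rfl Iff.rfl fun j _ hj => hs j hj

theorem extSet_inter_Iio_congr (hk : m ≤ k) (hk' : m ≤ k') (hs : ∀ j ≤ m, s j = s' j) :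
    ExtSet k s ∩ Set.Iio m = ExtSet k' s' ∩ Set.Iio m := by
  ext i
  simp only [Set.mem_inter_iff, Set.mem_Iio, and_congr_left_iff]
  intro hi
  exact mem_extSet_congr (by omega) (by omega) fun j hj _ => hs j (by omega)

theorem self_mem_extSet (h : k ≠ 0 → s (k - 1) ≠ s k) : k ∈ ExtSet k s := by
  rcases eq_or_ne k 0 with rfl | hk
  · exact Or.inl ⟨le_rfl, absurd rfl, absurd rfl⟩
  · rcases (h hk).lt_or_gt with hlt | hgt
    · exact Or.inl ⟨le_rfl, fun _ => hlt, absurd rfl⟩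
    · exact Or.inr ⟨le_rfl, fun _ => hgt, absurd rfl⟩

theorem sub_mem_extSet_comp_sub (hi : i ∈ ExtSet k s) :
    k - i ∈ ExtSet k (fun j => s (k - j)) := by
  have hik : i ≤ k := extSet_subset_Iic hi
  have e₀ : k - (k - i) = i := by omega
  have e₁ : k - i ≠ 0 → k - (k - i - 1) = i + 1 := by omega
  have e₂ : k - i ≠ k → k - (k - i + 1) = i - 1 := by omega
  have c₁ : k - i ≠ 0 → i ≠ k := by omega
  have c₂ : k - i ≠ k → i ≠ 0 := by omega
  rcases hi with ⟨-, hl, hr⟩ | ⟨-, hl, hr⟩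
  · refine Or.inl ⟨Nat.sub_le k i, fun h => ?_, fun h => ?_⟩
    · simpa only [e₀, e₁ h] using hr (c₁ h)
    · simpa only [e₀, e₂ h] using hl (c₂ h)
  · refine Or.inr ⟨Nat.sub_le k i, fun h => ?_, fun h => ?_⟩
    · simpa only [e₀, e₁ h] using hr (c₁ h)
    · simpa only [e₀, e₂ h] using hl (c₂ h)

theorem ncard_extSet_inter_Iio_le (hk : m ≤ k) (hk' : m ≤ k') (hs : ∀ j ≤ m, s j = s' j)
    (hend : k' ∈ ExtSet k' s') :
    (ExtSet k s ∩ Set.Iio (m + 1)).ncard ≤ (ExtSet k' s').ncard := by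
  -- the extremum at `m`, whose right neighbour may change, is traded for the endpoint `k'`
  have hsub : ExtSet k s ∩ Set.Iio (m + 1) ⊆ insert m (ExtSet k' s' ∩ Set.Iio m) := by
    rw [← extSet_inter_Iio_congr hk hk' hs]
    rintro i ⟨hi, hlt⟩
    rcases (Nat.lt_succ_iff.mp hlt).eq_or_lt with rfl | h
    · exact Set.mem_insert _ _
    · exact Set.mem_insert_of_mem _ ⟨hi, h⟩
  have hk'_notMem : k' ∉ ExtSet k' s' ∩ Set.Iio m := fun h => (not_lt.mpr hk') h.2
  calc (ExtSet k s ∩ Set.Iio (m + 1)).ncard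
      ≤ (insert m (ExtSet k' s' ∩ Set.Iio m)).ncard :=
        Set.ncard_le_ncard hsub ((extSet_finite.inter_of_left _).insert _)
    _ ≤ (ExtSet k' s' ∩ Set.Iio m).ncard + 1 := Set.ncard_insert_le _ _
    _ = (insert k' (ExtSet k' s' ∩ Set.Iio m)).ncard :=
        (Set.ncard_insert_of_notMem hk'_notMem (extSet_finite.inter_of_left _)).symm
    _ ≤ (ExtSet k' s').ncard :=
        Set.ncard_le_ncard (Set.insert_subset hend Set.inter_subset_left) extSet_finite

end ExtSet

section Extrema

variable {X : Type*} [LinearOrder X]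

def extrema (l : List X) (d : X) : Set ℕ :=
  ExtSet (l.length - 1) (l.getD · d)

noncomputable def numExtrema (l : List X) : ℕ :=
  if h : l = [] then 0 else (extrema l (l.head h)).ncard

theorem extrema_congr_default {l : List X} (hl : l ≠ []) (d d' : X) :
    extrema l d = extrema l d' := by
  have hlen := List.length_pos_iff.mpr hl
  refine extSet_congr fun j hj => ?_
  simp only [List.getD_eq_getElem _ _ (show j < l.length by omega)]

theorem numExtrema_eq_ncard {l : List X} (hl : l ≠ []) (d : X) :
    numExtrema l = (extrema l d).ncard := by
  rw [numExtrema, dif_neg hl, extrema_congr_default hl]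

theorem length_sub_one_mem_extrema {l : List X} (hl : l.IsChain (· ≠ ·)) (d : X) :
    l.length - 1 ∈ extrema l d := by
  refine self_mem_extSet fun hk => ?_
  have hi : l.length - 1 - 1 + 1 < l.length := by omega
  have h := List.isChain_iff_getElem.mp hl (l.length - 1 - 1) hi
  rw [List.getD_eq_getElem _ _ (Nat.lt_of_succ_lt hi), List.getD_eq_getElem _ _ (by omega)]
  simpa only [show l.length - 1 - 1 + 1 = l.length - 1 by omega] using h

theorem sub_mem_extrema_reverse {l : List X} {d : X} {i : ℕ} (hi : i ∈ extrema l d) :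
    l.length - 1 - i ∈ extrema l.reverse d := by
  have hrev : ∀ j ≤ l.length - 1, l.reverse.getD j d = l.getD (l.length - 1 - j) d := by
    intro j hj
    rcases eq_or_ne l [] with rfl | hl
    · rfl
    · exact congrFun (List.getD_reverse j (by have := List.length_pos_iff.mpr hl; omega)) d
  rw [extrema, List.length_reverse, extSet_congr hrev]
  exact sub_mem_extSet_comp_sub hi

theorem ncard_extrema_le_reverse (l : List X) (d : X) :
    (extrema l d).ncard ≤ (extrema l.reverse d).ncard :=
  Set.ncard_le_ncard_of_injOn (l.length - 1 - ·) (fun _ => sub_mem_extrema_reverse)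
    ((Nat.sub_injOn_Iic _).mono extSet_subset_Iic) extSet_finite

theorem numExtrema_reverse (l : List X) : numExtrema l.reverse = numExtrema l := by
  rcases eq_or_ne l [] with rfl | hl
  · rfl
  obtain ⟨d⟩ : Nonempty X := ⟨l.head hl⟩
  rw [numExtrema_eq_ncard hl d, numExtrema_eq_ncard (List.reverse_ne_nil_iff.mpr hl) d]
  refine le_antisymm ?_ (ncard_extrema_le_reverse l d)
  simpa using ncard_extrema_le_reverse l.reverse d

end Extrema

section Splice

variable {X : Type*} [LinearOrder X]

theorem ncard_extrema_append_inter_Iio_le (u t s : List X) (d : X)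
    (hs : (u ++ s).IsChain (· ≠ ·)) :
    (extrema (u ++ t) d ∩ Set.Iio u.length).ncard ≤ numExtrema (u ++ s) := by
  rcases eq_or_ne u [] with rfl | hu
  · simp
  have hlen := List.length_pos_iff.mpr hu
  rw [numExtrema_eq_ncard (List.append_ne_nil_of_left_ne_nil hu s) d,
    show u.length = u.length - 1 + 1 by omega]
  refine ncard_extSet_inter_Iio_le (by simp only [List.length_append]; omega)
    (by simp only [List.length_append]; omega) (fun j hj => ?_)
    (length_sub_one_mem_extrema hs d)
  rw [List.getD_append _ _ _ _ (by omega), List.getD_append _ _ _ _ (by omega)]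

theorem numExtrema_append_le (u t s₁ s₂ : List X) (h₁ : (u ++ s₁).IsChain (· ≠ ·))
    (h₂ : (s₂ ++ t).IsChain (· ≠ ·)) :
    numExtrema (u ++ t) ≤ numExtrema (u ++ s₁) + numExtrema (s₂ ++ t) := by
  rcases eq_or_ne (u ++ t) [] with hnil | hne
  · simp [numExtrema, hnil]
  obtain ⟨d⟩ : Nonempty X := ⟨(u ++ t).head hne⟩
  set E := extrema (u ++ t) d
  have hsuffix : (E \ Set.Iio u.length).ncard ≤ numExtrema (s₂ ++ t) := by
    have h₂' : (t.reverse ++ s₂.reverse).IsChain (· ≠ ·) := by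
      rw [← List.reverse_append, List.isChain_reverse]
      exact h₂.imp fun _ _ h => h.symm
    calc (E \ Set.Iio u.length).ncard
        ≤ (extrema (t.reverse ++ u.reverse) d ∩ Set.Iio t.length).ncard := by
          refine Set.ncard_le_ncard_of_injOn ((u ++ t).length - 1 - ·) (fun i hi => ?_)
            ((Nat.sub_injOn_Iic _).mono fun i hi => extSet_subset_Iic hi.1)
            (extSet_finite.inter_of_left _)
          obtain ⟨hiE, hiu⟩ := hi
          have hik : i ≤ (u ++ t).length - 1 := extSet_subset_Iic hiE
          refine ⟨by simpa using sub_mem_extrema_reverse hiE, ?_⟩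
          have hpos := List.length_pos_iff.mpr hne
          simp only [Set.mem_Iio, not_lt, List.length_append] at hik hiu hpos ⊢
          omega
      _ ≤ numExtrema (t.reverse ++ s₂.reverse) := by
          rw [← List.length_reverse (as := t)]
          exact ncard_extrema_append_inter_Iio_le t.reverse u.reverse s₂.reverse d h₂'
      _ = numExtrema (s₂ ++ t) := by rw [← List.reverse_append, numExtrema_reverse]
  rw [numExtrema_eq_ncard hne d,
    ← Set.ncard_inter_add_ncard_sdiff_eq_ncard E (Set.Iio u.length) extSet_finite]
  exact add_le_add (ncard_extrema_append_inter_Iio_le u t s₁ d h₁) hsuffix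

end Splice
section Eta

variable {X : Type*} [LinearOrder X]

theorem eta_eq_numExtrema (w : FreeGroup X) : eta w = numExtrema (wordSupport w) := rfl

theorem isChain_wordSupport (w : FreeGroup X) : (wordSupport w).IsChain (· ≠ ·) :=
  List.isChain_destutter _ _

theorem wordSupport_inv (w : FreeGroup X) : wordSupport w⁻¹ = (wordSupport w).reverse := by
  rw [wordSupport, wordSupport, FreeGroup.toWord_inv, ← List.destutter_ne_reverse]
  simp [FreeGroup.invRev, List.map_reverse, Function.comp_def]

theorem exists_wordSupport_mul (a b : FreeGroup X) : ∃ u t s₁ s₂,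
    wordSupport (a * b) = u ++ t ∧ wordSupport a = u ++ s₁ ∧ wordSupport b = s₂ ++ t := by
  obtain ⟨p, q, ⟨r₁, hr₁⟩, ⟨r₂, hr₂⟩, hab⟩ := FreeGroup.exists_toWord_mul_eq_append a b
  obtain ⟨t, ht, hts⟩ := List.destutter_ne_append (p.map Prod.fst) (q.map Prod.fst)
  obtain ⟨s₁, hs₁, -⟩ := List.destutter_ne_append (p.map Prod.fst) (r₁.map Prod.fst)
  obtain ⟨s₂, hs₂⟩ := hts.trans (List.destutter_ne_suffix_append (r₂.map Prod.fst) (q.map Prod.fst))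
  refine ⟨(p.map Prod.fst).destutter (· ≠ ·), t, s₁, s₂, ?_, ?_, ?_⟩
  · rw [wordSupport, hab, List.map_append, ht]
  · rw [wordSupport, ← hr₁, List.map_append, hs₁]
  · rw [wordSupport, ← hr₂, List.map_append, hs₂]

theorem eta_mul_le (a b : FreeGroup X) : eta (a * b) ≤ eta a + eta b := by
  obtain ⟨u, t, s₁, s₂, hab, ha, hb⟩ := exists_wordSupport_mul a b
  simp only [eta_eq_numExtrema, hab, ha, hb]
  exact numExtrema_append_le u t s₁ s₂ (ha ▸ isChain_wordSupport a) (hb ▸ isChain_wordSupport b)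

theorem eta_inv (w : FreeGroup X) : eta w⁻¹ = eta w := by
  rw [eta_eq_numExtrema, eta_eq_numExtrema, wordSupport_inv, numExtrema_reverse]

end Eta

/-- For a linearly ordered alphabet `X`, the function `η` counting local extrema of the
support of a word is a seminorm on the free group `F(X)`:
`η (a * b) ≤ η a + η b` and `η a⁻¹ = η a`. -/
theorem stmt17 {X : Type*} [LinearOrder X] (a b : FreeGroup X) :
    eta (a * b) ≤ eta a + eta b ∧ eta a⁻¹ = eta a :=
  ⟨eta_mul_le a b, eta_inv a⟩
end
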